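/- Let f : ℝ → ℝ be continuous, let e, a, b, a', b', c, c' be real constants with e ≠ 0 and ab' − a'b ≠ 0. Let Ω ⊆ ℝ² be open and v : ℝ² → ℝ be C² on Ω satisfying v_t = f(v_x)v_xx and a + b·v_x(t,x) ≠ 0 on Ω. Fix (t₀,x₀) ∈ Ω and set T₀ = e·t₀ + e₀, Y₀ = a·x₀ + b·v(t₀,x₀) + c. Suppose w : ℝ² → ℝ is C² on a neighborhood of (T₀,Y₀) and satisfies w(e·t + e₀, a·x + b·v(t,x) + c) = a'·x + b'·v(t,x) + c' for all (t,x) in a neighborhood of (t₀,x₀) in Ω. Then at (T₀,Y₀): w_Y = (a' + b'·v_x(t₀,x₀))/(a + b·v_x(t₀,x₀)) and w_T = e⁻¹(a + b·v_x(t₀,x₀))² f(v_x(t₀,x₀)) · w_YY. (This expresses that the stated transformations form the equivalence group G∼ of the class of nonlinear filtration equations, with transformed nonlinearity f̃ = e⁻¹(a + b·v_x)² f.) -/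

import Mathlib

/-- Partial derivative with respect to the first variable (time). -/
noncomputable def pt (u : ℝ × ℝ → ℝ) (p : ℝ × ℝ) : ℝ :=
  deriv (fun s => u (s, p.2)) p.1

/-- Partial derivative with respect to the second variable (space). -/
noncomputable def px (u : ℝ × ℝ → ℝ) (p : ℝ × ℝ) : ℝ :=
  deriv (fun y => u (p.1, y)) p.2

/-!
Differentiate the defining relation `w(e t + e₀, a x + b v + c) = a' x + b' v + c'`.
Once in `x` it gives `w_Y (a + b v_x) = a' + b' v_x`, the first claim, and a second time
`w_YY (a + b v_x)² + w_Y b v_xx = b' v_xx`. Once in `t` it gives `e w_T + b v_t w_Y = b' v_t`,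
so `e w_T = (b' - b w_Y) v_t = (b' - b w_Y) f(v_x) v_xx = (a + b v_x)² f(v_x) w_YY`.
-/

open Filter Topology

section Partials

variable {u : ℝ × ℝ → ℝ} {p : ℝ × ℝ}

theorem pt_eq_fderiv (hu : DifferentiableAt ℝ u p) : pt u p = fderiv ℝ u p (1, 0) :=
  (hu.hasFDerivAt.comp_hasDerivAt p.1
    ((hasDerivAt_id p.1).prodMk (hasDerivAt_const p.1 p.2))).deriv

theorem px_eq_fderiv (hu : DifferentiableAt ℝ u p) : px u p = fderiv ℝ u p (0, 1) :=
  (hu.hasFDerivAt.comp_hasDerivAt p.2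
    ((hasDerivAt_const p.2 p.1).prodMk (hasDerivAt_id p.2))).deriv

theorem hasDerivAt_pt (hu : DifferentiableAt ℝ u p) :
    HasDerivAt (fun s => u (s, p.2)) (pt u p) p.1 :=
  (hu.comp p.1 (differentiableAt_id.prodMk (differentiableAt_const p.2))).hasDerivAt

theorem hasDerivAt_comp_curve {γ : ℝ → ℝ × ℝ} {α β s : ℝ}
    (hu : DifferentiableAt ℝ u (γ s)) (hγ : HasDerivAt γ (α, β) s) :
    HasDerivAt (fun r => u (γ r)) (α * pt u (γ s) + β * px u (γ s)) s := by
  have hαβ : ((α, β) : ℝ × ℝ) = α • (1, 0) + β • (0, 1) := by simp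
  refine (hu.hasFDerivAt.comp_hasDerivAt s hγ).congr_deriv ?_
  rw [pt_eq_fderiv hu, px_eq_fderiv hu, hαβ, map_add, map_smul, map_smul, smul_eq_mul,
    smul_eq_mul]

theorem ContDiffAt.comp_prodMk_right {n : WithTop ℕ∞} {s y : ℝ} (hu : ContDiffAt ℝ n u (s, y)) :
    ContDiffAt ℝ n (fun y' => u (s, y')) y :=
  hu.comp y (contDiffAt_const.prodMk contDiffAt_id)

end Partials

section SecondDerivative

variable {g h V : ℝ → ℝ} {x : ℝ}

theorem ContDiffAt.differentiableAt_deriv (hV : ContDiffAt ℝ 2 V x) :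
    DifferentiableAt ℝ (deriv V) x :=
  (hV.derivWithin (m := 1) (by norm_num)).differentiableAt one_ne_zero

theorem deriv_deriv_comp (hg : ContDiffAt ℝ 2 g (h x)) (hh : ContDiffAt ℝ 2 h x) :
    deriv (deriv (g ∘ h)) x =
      deriv (deriv g) (h x) * deriv h x ^ 2 + deriv g (h x) * deriv (deriv h) x := by
  have hderiv : deriv (g ∘ h) =ᶠ[𝓝 x] fun y => deriv g (h y) * deriv h y := by
    filter_upwards [hh.continuousAt.eventually (hg.eventually (by simp)),
      hh.eventually (by simp)] with y hgy hhy
    exact deriv_comp y (hgy.differentiableAt two_ne_zero) (hhy.differentiableAt two_ne_zero)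
  have hprod : HasDerivAt (fun y => deriv g (h y) * deriv h y) _ x := (hg.differentiableAt_deriv.hasDerivAt.comp x
    (hh.differentiableAt two_ne_zero).hasDerivAt).mul hh.differentiableAt_deriv.hasDerivAt
  rw [hderiv.deriv_eq, hprod.deriv, Function.comp_apply]
  ring

theorem deriv_affine_comb (hV : DifferentiableAt ℝ V x) (a b c : ℝ) :
    deriv (fun y => a * y + b * V y + c) x = a + b * deriv V x := by
  simpa using ((((hasDerivAt_id x).const_mul a).add (hV.hasDerivAt.const_mul b)).add_const c).deriv

theorem deriv_deriv_affine_comb (hV : ContDiffAt ℝ 2 V x) (a b c : ℝ) :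
    deriv (deriv fun y => a * y + b * V y + c) x = b * deriv (deriv V) x := by
  have hderiv : deriv (fun y => a * y + b * V y + c) =ᶠ[𝓝 x] fun y => a + b * deriv V y := by
    filter_upwards [hV.eventually (by simp)] with y hy
    exact deriv_affine_comb (hy.differentiableAt two_ne_zero) a b c
  rw [hderiv.deriv_eq, deriv_const_add', deriv_const_mul_field']

end SecondDerivative

theorem equivalence_group_nonlinear_filtration_general
    (f : ℝ → ℝ)
    (e e₀ a b a' b' c c' : ℝ) (he : e ≠ 0)
    (Ω : Set (ℝ × ℝ)) (hΩ : IsOpen Ω)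
    (v : ℝ × ℝ → ℝ) (hv : ContDiffOn ℝ 2 v Ω)
    (hpde : ∀ p ∈ Ω, pt v p = f (px v p) * px (px v) p)
    (hden : ∀ p ∈ Ω, a + b * px v p ≠ 0)
    (t₀ x₀ : ℝ) (hmem : (t₀, x₀) ∈ Ω)
    (T₀ Y₀ : ℝ) (hT₀ : T₀ = e * t₀ + e₀) (hY₀ : Y₀ = a * x₀ + b * v (t₀, x₀) + c)
    (w : ℝ × ℝ → ℝ) (hw : ContDiffAt ℝ 2 w (T₀, Y₀))
    (htr : ∀ᶠ p in nhds (t₀, x₀), p ∈ Ω ∧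
      w (e * p.1 + e₀, a * p.2 + b * v p + c) = a' * p.2 + b' * v p + c') :
    px w (T₀, Y₀) = (a' + b' * px v (t₀, x₀)) / (a + b * px v (t₀, x₀)) ∧
      pt w (T₀, Y₀) =
        e⁻¹ * (a + b * px v (t₀, x₀)) ^ 2 * f (px v (t₀, x₀)) * px (px w) (T₀, Y₀) := by
  set V : ℝ → ℝ := fun x => v (t₀, x)
  set g : ℝ → ℝ := fun y => w (T₀, y)
  set h : ℝ → ℝ := fun x => a * x + b * V x + c
  have hv₀ : ContDiffAt ℝ 2 v (t₀, x₀) := hv.contDiffAt (hΩ.mem_nhds hmem)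
  have hV : ContDiffAt ℝ 2 V x₀ := hv₀.comp_prodMk_right
  have hh : ContDiffAt ℝ 2 h x₀ := by fun_prop
  have hhx₀ : h x₀ = Y₀ := hY₀.symm
  have hg : ContDiffAt ℝ 2 g (h x₀) := hhx₀ ▸ hw.comp_prodMk_right
  have hspace : g ∘ h =ᶠ[𝓝 x₀] fun x => a' * x + b' * V x + c' :=
    ((continuous_const.prodMk continuous_id).tendsto x₀).eventually htr |>.mono
      fun x hx => by simpa [g, h, V, hT₀] using hx.2
  have htime : (fun t => w (e * t + e₀, a * x₀ + b * v (t, x₀) + c)) =ᶠ[𝓝 t₀]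
      fun t => a' * x₀ + b' * v (t, x₀) + c' :=
    ((continuous_id.prodMk continuous_const).tendsto t₀).eventually htr |>.mono fun t ht => ht.2
  have hV' : DifferentiableAt ℝ V x₀ := hV.differentiableAt two_ne_zero
  have hE1 : px w (T₀, Y₀) * (a + b * px v (t₀, x₀)) = a' + b' * px v (t₀, x₀) := by
    have h1 := hspace.deriv_eq
    rw [deriv_comp x₀ (hg.differentiableAt two_ne_zero) (hh.differentiableAt two_ne_zero),
      deriv_affine_comb hV', deriv_affine_comb hV', hhx₀] at h1
    exact h1
  have hE2 : px (px w) (T₀, Y₀) * (a + b * px v (t₀, x₀)) ^ 2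
      + px w (T₀, Y₀) * (b * px (px v) (t₀, x₀)) = b' * px (px v) (t₀, x₀) := by
    have h2 := hspace.deriv.deriv_eq
    rw [deriv_deriv_comp hg hh, deriv_deriv_affine_comb hV, deriv_affine_comb hV',
      deriv_deriv_affine_comb hV, hhx₀] at h2
    exact h2
  have hE3 : e * pt w (T₀, Y₀) + b * pt v (t₀, x₀) * px w (T₀, Y₀) = b' * pt v (t₀, x₀) := by
    have hvt : HasDerivAt (fun t => v (t, x₀)) (pt v (t₀, x₀)) t₀ :=
      hasDerivAt_pt (hv₀.differentiableAt two_ne_zero)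
    have hγ : HasDerivAt (fun t => (e * t + e₀, a * x₀ + b * v (t, x₀) + c))
        (e, b * pt v (t₀, x₀)) t₀ := by
      refine HasDerivAt.prodMk ?_ ?_
      · simpa using ((hasDerivAt_id t₀).const_mul e).add_const e₀
      · simpa using ((hvt.const_mul b).const_add (a * x₀)).add_const c
    have hγ₀ : (e * t₀ + e₀, a * x₀ + b * v (t₀, x₀) + c) = (T₀, Y₀) := by rw [hT₀, hY₀]
    have hlhs := hasDerivAt_comp_curve (hγ₀ ▸ hw.differentiableAt two_ne_zero) hγ
    rw [hγ₀] at hlhs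
    exact (hlhs.congr_of_eventuallyEq htime.symm).unique
      (((hvt.const_mul b').const_add (a' * x₀)).add_const c')
  refine ⟨(eq_div_iff (hden _ hmem)).mpr hE1, ?_⟩
  rw [hpde _ hmem] at hE3
  field_simp
  linear_combination hE3 - f (px v (t₀, x₀)) * hE2

/-- The transformations `t̃ = e t + e₀, x̃ = a x + b v + c, ṽ = a' x + b' v + c'` with
`e ≠ 0`, `a b' − a' b ≠ 0` form the equivalence group of the class of nonlinear filtration
equations `v_t = f(v_x) v_xx`, with transformed nonlinearity `f̃ = e⁻¹ (a + b v_x)² f`. -/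
theorem equivalence_group_nonlinear_filtration
    (f : ℝ → ℝ) (hf : Continuous f)
    (e e₀ a b a' b' c c' : ℝ) (he : e ≠ 0) (hab : a * b' - a' * b ≠ 0)
    (Ω : Set (ℝ × ℝ)) (hΩ : IsOpen Ω)
    (v : ℝ × ℝ → ℝ) (hv : ContDiffOn ℝ 2 v Ω)
    (hpde : ∀ p ∈ Ω, pt v p = f (px v p) * px (px v) p)
    (hden : ∀ p ∈ Ω, a + b * px v p ≠ 0)
    (t₀ x₀ : ℝ) (hmem : (t₀, x₀) ∈ Ω)
    (T₀ Y₀ : ℝ) (hT₀ : T₀ = e * t₀ + e₀) (hY₀ : Y₀ = a * x₀ + b * v (t₀, x₀) + c)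
    (w : ℝ × ℝ → ℝ) (hw : ContDiffAt ℝ 2 w (T₀, Y₀))
    (htr : ∀ᶠ p in nhds (t₀, x₀), p ∈ Ω ∧
      w (e * p.1 + e₀, a * p.2 + b * v p + c) = a' * p.2 + b' * v p + c') :
    px w (T₀, Y₀) = (a' + b' * px v (t₀, x₀)) / (a + b * px v (t₀, x₀)) ∧
      pt w (T₀, Y₀) =
        e⁻¹ * (a + b * px v (t₀, x₀)) ^ 2 * f (px v (t₀, x₀)) * px (px w) (T₀, Y₀) :=
  equivalence_group_nonlinear_filtration_general f e e₀ a b a' b' c c' he Ω hΩ v hv hpde hden t₀ x₀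
    hmem T₀ Y₀ hT₀ hY₀ w hw htr
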